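/- arXiv:2004.09195 — 6 statements merged into one kernel-verified Lean document; each statement's English description precedes it below -/
import Mathlib

section
/- Let n ≥ 1 and m ≥ 1 be integers and let a > 0 be a real number. Then the polyharmonic heat kernel E_{m,a} is integrable on ℝⁿ and ∫_{ℝⁿ} E_{m,a}(x) dx = 1. -/
/-!
With Mathlib's normalisation `𝓕⁻ g w = ∫ v, exp (2πi⟪v, w⟫) g v`, the kernel is
`E_{m,a} x = (2π)⁻ⁿ (𝓕⁻ f) ((2π)⁻¹ x)` for `f s = exp (-a ‖s‖^(2m))`. For `m ≥ 1` this `f` is a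
Schwartz function: on `[0, ∞)` it is the profile `t ↦ exp (-a t^m)`, cut off smoothly on the
negative axis, composed with `s ↦ ‖s‖²`. Hence `𝓕⁻ f` is Schwartz, in particular integrable, and
Fourier inversion gives `∫ 𝓕⁻ f = 𝓕 (𝓕⁻ f) 0 = f 0 = 1`. The rescaling by `(2π)⁻¹` multiplies
the integral by `(2π)ⁿ`, which the prefactor cancels.
-/

open MeasureTheory Real Complex

noncomputable def heatKernel (n m : ℕ) (a : ℝ) (x : EuclideanSpace ℝ (Fin n)) : ℂ :=
  ((2 * Real.pi) ^ n : ℝ)⁻¹ •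
    ∫ s : EuclideanSpace ℝ (Fin n),
      Complex.exp (Complex.I * ((inner ℝ x s : ℝ) : ℂ) - (a : ℂ) * ((‖s‖ : ℝ) : ℂ) ^ (2 * m))

open scoped SchwartzMap FourierTransform RealInnerProductSpace ContDiff Polynomial Topology
open Filter

theorem exists_iteratedDeriv_exp_neg_mul_pow_eq (a : ℝ) (m N : ℕ) :
    ∃ P : ℝ[X], iteratedDeriv N (fun t ↦ rexp (-(a * t ^ m))) =
      fun t ↦ P.eval t * rexp (-(a * t ^ m)) := by
  induction N with
  | zero => exact ⟨1, by simp⟩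
  | succ N ih =>
    obtain ⟨P, hP⟩ := ih
    refine ⟨Polynomial.derivative P - Polynomial.C (a * m) * Polynomial.X ^ (m - 1) * P, ?_⟩
    ext t
    rw [iteratedDeriv_succ, hP]
    have hexp : HasDerivAt (fun t ↦ rexp (-(a * t ^ m)))
        (rexp (-(a * t ^ m)) * -(a * (m * t ^ (m - 1)))) t :=
      ((hasDerivAt_pow m t).const_mul a).neg.exp
    rw [((P.hasDerivAt t).fun_mul hexp).deriv]
    simp only [Polynomial.eval_sub, Polynomial.eval_mul, Polynomial.eval_C,
      Polynomial.eval_pow, Polynomial.eval_X]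
    ring

theorem Continuous.bddAbove_range_of_tendsto_cocompact {X : Type*} [TopologicalSpace X]
    {G : X → ℝ} (hG : Continuous G) (h : Tendsto G (cocompact X) (𝓝 0)) :
    BddAbove (Set.range G) :=
  (ZeroAtInftyContinuousMap.isBounded_range ⟨⟨G, hG⟩, h⟩).bddAbove

section ExpNegMulPow

variable {a : ℝ} {m : ℕ}

theorem tendsto_pow_mul_exp_neg_mul_pow_atTop (ha : 0 < a) (hm : 1 ≤ m) (k : ℕ) :
    Tendsto (fun t ↦ t ^ k * rexp (-(a * t ^ m))) atTop (𝓝 0) := by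
  have hlin : Tendsto (fun t ↦ t ^ k * rexp (-a * t)) atTop (𝓝 0) := by
    simpa [Real.rpow_natCast] using tendsto_rpow_mul_exp_neg_mul_atTop_nhds_zero k a ha
  refine squeeze_zero' ?_ ?_ hlin
  · filter_upwards [eventually_ge_atTop 0] with t ht using by positivity
  · filter_upwards [eventually_ge_atTop 1] with t ht
    gcongr
    rw [neg_mul, neg_le_neg_iff]
    exact mul_le_mul_of_nonneg_left (le_self_pow₀ ht (by omega)) ha.le

theorem tendsto_pow_mul_eval_mul_exp_neg_mul_pow_atTop (ha : 0 < a) (hm : 1 ≤ m) (k : ℕ)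
    (P : ℝ[X]) :
    Tendsto (fun t ↦ t ^ k * (P.eval t * rexp (-(a * t ^ m)))) atTop (𝓝 0) := by
  have hsum : (fun t ↦ t ^ k * (P.eval t * rexp (-(a * t ^ m)))) = fun t ↦
      ∑ i ∈ Finset.range (P.natDegree + 1), P.coeff i * (t ^ (k + i) * rexp (-(a * t ^ m))) := by
    ext t
    rw [Polynomial.eval_eq_sum_range, Finset.sum_mul, Finset.mul_sum]
    refine Finset.sum_congr rfl fun i _ ↦ ?_
    ring
  rw [hsum]
  simpa using tendsto_finsetSum _ fun i _ ↦
    (tendsto_pow_mul_exp_neg_mul_pow_atTop ha hm (k + i)).const_mul (P.coeff i)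

theorem exists_pow_mul_norm_iteratedFDeriv_smoothTransition_mul_exp_neg_mul_pow_le
    (ha : 0 < a) (hm : 1 ≤ m) (k N : ℕ) : ∃ C, ∀ t : ℝ, ‖t‖ ^ k *
      ‖iteratedFDeriv ℝ N (fun t ↦ smoothTransition (t + 1) * rexp (-(a * t ^ m))) t‖ ≤ C := by
  set f := fun t : ℝ ↦ smoothTransition (t + 1) * rexp (-(a * t ^ m))
  have hf : ContDiff ℝ ∞ f := by fun_prop
  obtain ⟨P, hP⟩ := exists_iteratedDeriv_exp_neg_mul_pow_eq a m N
  have hlim : Tendsto (fun t ↦ ‖t‖ ^ k * ‖iteratedFDeriv ℝ N f t‖) (cocompact ℝ) (𝓝 0) := by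
    simp_rw [cocompact_eq_atBot_atTop, tendsto_sup, norm_iteratedFDeriv_eq_norm_iteratedDeriv]
    constructor
    · refine tendsto_const_nhds.congr' ?_
      filter_upwards [eventually_lt_atBot (-1)] with t ht
      have hzero : f =ᶠ[𝓝 t] 0 := by
        filter_upwards [Iio_mem_nhds ht] with s hs
        simp [f, smoothTransition.zero_of_nonpos (by linarith [Set.mem_Iio.mp hs] : s + 1 ≤ 0)]
      simp [hzero.iteratedDeriv_eq, iteratedDeriv_const_zero]
    · have hpoly := (tendsto_pow_mul_eval_mul_exp_neg_mul_pow_atTop ha hm k P).norm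
      rw [norm_zero] at hpoly
      refine hpoly.congr' ?_
      filter_upwards [eventually_gt_atTop 0] with t ht
      have hone : f =ᶠ[𝓝 t] fun t ↦ rexp (-(a * t ^ m)) := by
        filter_upwards [Ioi_mem_nhds ht] with s hs
        simp [f, smoothTransition.one_of_one_le (by linarith [Set.mem_Ioi.mp hs] : 1 ≤ s + 1)]
      rw [hone.iteratedDeriv_eq, hP, norm_mul, norm_mul, norm_pow]
  obtain ⟨C, hC⟩ := Continuous.bddAbove_range_of_tendsto_cocompact
    ((continuous_norm.pow k).mul (hf.continuous_iteratedFDeriv (mod_cast le_top)).norm) hlim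
  exact ⟨C, fun t ↦ hC ⟨t, rfl⟩⟩

end ExpNegMulPow

noncomputable section Schwartz

variable {a : ℝ} {m : ℕ}

/-- Equal to `exp (-a t ^ m)` on `[0, ∞)`; the cutoff removes the growth at `-∞` for odd `m`. -/
def cutoffExpNegMulPow (ha : 0 < a) (hm : 1 ≤ m) : 𝓢(ℝ, ℝ) where
  toFun t := smoothTransition (t + 1) * rexp (-(a * t ^ m))
  smooth' := by fun_prop
  decay' := exists_pow_mul_norm_iteratedFDeriv_smoothTransition_mul_exp_neg_mul_pow_le ha hm

theorem cutoffExpNegMulPow_apply_of_nonneg (ha : 0 < a) (hm : 1 ≤ m) {t : ℝ} (ht : 0 ≤ t) :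
    cutoffExpNegMulPow ha hm t = rexp (-(a * t ^ m)) := by
  show smoothTransition (t + 1) * _ = _
  rw [smoothTransition.one_of_one_le (by linarith), one_mul]

variable (V : Type*) [NormedAddCommGroup V] [InnerProductSpace ℝ V]

def SchwartzMap.compNormSq {F : Type*} [NormedAddCommGroup F] [NormedSpace ℝ F]
    (φ : 𝓢(ℝ, F)) : 𝓢(V, F) :=
  SchwartzMap.compCLM ℝ (Function.hasTemperateGrowth_norm_sq V)
    ⟨1, 1, fun x ↦ by
      rw [norm_pow, norm_norm, one_mul, pow_one]
      nlinarith [sq_nonneg (‖x‖ - 1)]⟩ φ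

def expNegMulNormPow (ha : 0 < a) (hm : 1 ≤ m) : 𝓢(V, ℂ) :=
  (SchwartzMap.postcompCLM Complex.ofRealCLM (cutoffExpNegMulPow ha hm)).compNormSq V

theorem expNegMulNormPow_apply (ha : 0 < a) (hm : 1 ≤ m) (x : V) :
    expNegMulNormPow V ha hm x = (rexp (-(a * ‖x‖ ^ (2 * m))) : ℂ) := by
  simp [expNegMulNormPow, SchwartzMap.compNormSq,
    cutoffExpNegMulPow_apply_of_nonneg ha hm (sq_nonneg ‖x‖), pow_mul]

end Schwartz

section Fourier

variable {V : Type*} [NormedAddCommGroup V] [InnerProductSpace ℝ V] [MeasurableSpace V]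
  [BorelSpace V] [FiniteDimensional ℝ V]

theorem integral_cexp_I_inner_mul_eq_fourierInv (f : V → ℂ) (x : V) :
    ∫ s, cexp (I * ⟪x, s⟫) * f s = 𝓕⁻ f ((2 * π)⁻¹ • x) := by
  rw [Real.fourierInv_eq']
  congr with s
  rw [real_inner_smul_right, real_inner_comm, smul_eq_mul]
  field_simp

theorem SchwartzMap.integral_fourierInv {E : Type*} [NormedAddCommGroup E] [NormedSpace ℂ E]
    [CompleteSpace E] (f : 𝓢(V, E)) : ∫ x, (𝓕⁻ f : 𝓢(V, E)) x = f 0 := by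
  calc ∫ x, (𝓕⁻ f : 𝓢(V, E)) x = 𝓕 (⇑(𝓕⁻ f : 𝓢(V, E))) 0 := by simp [Real.fourier_eq]
    _ = f 0 := by rw [← SchwartzMap.fourier_coe, FourierInvPair.fourier_fourierInv_eq]

end Fourier

theorem heatKernel_eq_fourierInv (n m : ℕ) (a : ℝ) (x : EuclideanSpace ℝ (Fin n)) :
    heatKernel n m a x = ((2 * π) ^ n : ℝ)⁻¹ •
      𝓕⁻ (fun s : EuclideanSpace ℝ (Fin n) ↦ (rexp (-(a * ‖s‖ ^ (2 * m))) : ℂ))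
        ((2 * π)⁻¹ • x) := by
  rw [heatKernel, ← integral_cexp_I_inner_mul_eq_fourierInv]
  congr with s
  rw [sub_eq_add_neg, Complex.exp_add]
  push_cast
  rfl

theorem heatKernel_integrable_integral_one_general (n m : ℕ) (hm : 1 ≤ m)
    (a : ℝ) (ha : 0 < a) :
    Integrable (heatKernel n m a) ∧
    (∫ x : EuclideanSpace ℝ (Fin n), heatKernel n m a x) = 1 := by
  set F := 𝓕⁻ (expNegMulNormPow (EuclideanSpace ℝ (Fin n)) ha hm)
  have hK : heatKernel n m a = fun x ↦ ((2 * π) ^ n : ℝ)⁻¹ • F ((2 * π)⁻¹ • x) := by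
    ext x
    rw [heatKernel_eq_fourierInv, SchwartzMap.fourierInv_coe,
      funext (expNegMulNormPow_apply (EuclideanSpace ℝ (Fin n)) ha hm)]
  have h2π : 0 < 2 * π := by positivity
  refine ⟨hK ▸ (F.integrable.comp_smul (inv_ne_zero h2π.ne')).smul ((2 * π) ^ n : ℝ)⁻¹, ?_⟩
  rw [hK, integral_smul, Measure.integral_comp_inv_smul_of_nonneg _ _ h2π.le,
    SchwartzMap.integral_fourierInv, expNegMulNormPow_apply, finrank_euclideanSpace_fin,
    smul_smul, inv_mul_cancel₀ (by positivity)]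
  simp [zero_pow (by omega : 2 * m ≠ 0)]

theorem heatKernel_integrable_integral_one (n m : ℕ) (hn : 1 ≤ n) (hm : 1 ≤ m)
    (a : ℝ) (ha : 0 < a) :
    Integrable (heatKernel n m a) ∧
    (∫ x : EuclideanSpace ℝ (Fin n), heatKernel n m a x) = 1 :=
  heatKernel_integrable_integral_one_general n m hm a ha
end

section
/- Let n ≥ 1 and m ≥ 1 be integers and let a > 0 be a real number. Then the map x ↦ E_{m,a}(x) is infinitely differentiable on ℝⁿ (of class C^∞). -/
open MeasureTheory Real Complex

open Finset Function

abbrev HKV (n : ℕ) := EuclideanSpace ℝ (Fin n)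

lemma hk_pow_div_factorial_le_exp {x : ℝ} (hx : 0 ≤ x) (k : ℕ) :
    x ^ k / k.factorial ≤ Real.exp x := by
  refine le_trans ?_ (Real.sum_le_exp_of_nonneg hx (k + 1))
  have h : ∀ i ∈ Finset.range (k + 1), (0:ℝ) ≤ x ^ i / i.factorial := fun i _ => by positivity
  simpa using Finset.single_le_sum h (Finset.self_mem_range_succ k)

lemma hk_pow_le_exp {x : ℝ} (hx : 0 ≤ x) (k : ℕ) :
    x ^ k ≤ k.factorial * Real.exp x := by
  have h := hk_pow_div_factorial_le_exp hx k
  have hk : (0:ℝ) < k.factorial := by positivity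
  rw [div_le_iff₀ hk] at h
  linarith [h]

/-- Master pointwise decay bound. -/
lemma hk_exp_bound {m : ℕ} (hm : 1 ≤ m) {a t : ℝ} (ha : 0 < a) (ht : 0 ≤ t) :
    Real.exp t * Real.exp (-(a * t ^ (2 * m))) ≤
      Real.exp (a + 1 / (2 * a)) * Real.exp (-(a / 2 * t ^ 2)) := by
  rw [← Real.exp_add, ← Real.exp_add, Real.exp_le_exp]
  rcases le_total t 1 with h1 | h1
  · have h2 : t ^ 2 ≤ 1 := pow_le_one₀ ht h1
    have h3 : 0 ≤ a * t ^ (2 * m) := by positivity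
    have h4 : 0 < 2 * a := by positivity
    have h5 : (a - 1) ^ 2 ≥ 0 := sq_nonneg _
    have h6 : 1 ≤ a / 2 + 1 / (2 * a) := by
      rw [ge_iff_le, ← sub_nonneg] at h5
      have h7 : 0 < (2 * a) := by positivity
      rw [← sub_nonneg]
      have h8 : a / 2 + 1 / (2 * a) - 1 = (a - 1) ^ 2 / (2 * a) := by field_simp; ring
      rw [h8]
      positivity
    nlinarith
  · have h2 : t ^ 2 ≤ t ^ (2 * m) := pow_le_pow_right₀ h1 (by omega)
    have h3 : t ≤ a / 2 * t ^ 2 + 1 / (2 * a) := by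
      rw [← sub_nonneg]
      have h8 : a / 2 * t ^ 2 + 1 / (2 * a) - t = (a * t - 1) ^ 2 / (2 * a) := by
        field_simp; ring
      rw [h8]
      positivity
    nlinarith

/-- The basic product-of-inner-products multilinear map. -/
noncomputable def hkL (n k : ℕ) (s : HKV n) :
    MultilinearMap ℝ (fun _ : Fin k => HKV n) ℝ :=
  (MultilinearMap.mkPiAlgebra ℝ (Fin k) ℝ).compLinearMap
    fun _ => ((innerSL ℝ s : HKV n →L[ℝ] ℝ) : HKV n →ₗ[ℝ] ℝ)

lemma hkL_apply (n k : ℕ) (s : HKV n) (v : Fin k → HKV n) :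
    hkL n k s v = ∏ j, (inner ℝ s (v j) : ℝ) := by
  simp [hkL]

lemma hkL_bound (n k : ℕ) (s : HKV n) (v : Fin k → HKV n) :
    |hkL n k s v| ≤ (∏ j, ‖v j‖) * ‖s‖ ^ k := by
  rw [hkL_apply, Finset.abs_prod]
  calc ∏ j, |(inner ℝ s (v j) : ℝ)| ≤ ∏ j, (‖v j‖ * ‖s‖) := by
        refine Finset.prod_le_prod (fun j _ => abs_nonneg _) (fun j _ => ?_)
        calc |(inner ℝ s (v j) : ℝ)| ≤ ‖s‖ * ‖v j‖ := abs_real_inner_le_norm s (v j)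
          _ = ‖v j‖ * ‖s‖ := mul_comm _ _
    _ = (∏ j, ‖v j‖) * ‖s‖ ^ k := by
        rw [Finset.prod_mul_distrib, Finset.prod_const, Finset.card_univ, Fintype.card_fin]

/-- The continuous multilinear map `v ↦ ∫ (∏ j ⟪s, v j⟫) * w s`. -/
noncomputable def hkCMM (n k : ℕ) (w : HKV n → ℂ)
    (hw1 : ∀ (k : ℕ) (v : Fin k → HKV n),
      Integrable (fun s => ((hkL n k s v : ℝ) : ℂ) * w s))
    (hw2 : Integrable (fun s : HKV n => Real.exp ‖s‖ * ‖w s‖)) :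
    ContinuousMultilinearMap ℝ (fun _ : Fin k => HKV n) ℂ :=
  MultilinearMap.mkContinuous
    { toFun := fun v => ∫ s, ((hkL n k s v : ℝ) : ℂ) * w s
      map_update_add' := by
        intro inst v i x y
        have h : ∀ s : HKV n, ((hkL n k s (update v i (x + y)) : ℝ) : ℂ) * w s =
            ((hkL n k s (update v i x) : ℝ) : ℂ) * w s +
            ((hkL n k s (update v i y) : ℝ) : ℂ) * w s := by
          intro s
          rw [(hkL n k s).map_update_add]
          push_cast
          ring
        simp only [h]
        exact integral_add (hw1 k _) (hw1 k _)
      map_update_smul' := by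
        intro inst v i c x
        have h : ∀ s : HKV n, ((hkL n k s (update v i (c • x)) : ℝ) : ℂ) * w s =
            c • (((hkL n k s (update v i x) : ℝ) : ℂ) * w s) := by
          intro s
          rw [(hkL n k s).map_update_smul, smul_eq_mul, Complex.real_smul]
          push_cast
          ring
        simp only [h]
        exact integral_smul c _ }
    ((k.factorial : ℝ) * ∫ s, Real.exp ‖s‖ * ‖w s‖)
    (by
      intro v
      have hprod : (0:ℝ) ≤ ∏ j, ‖v j‖ := Finset.prod_nonneg fun j _ => norm_nonneg _
      calc ‖∫ s, ((hkL n k s v : ℝ) : ℂ) * w s‖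
          ≤ ∫ s, ‖((hkL n k s v : ℝ) : ℂ) * w s‖ := norm_integral_le_integral_norm _
        _ ≤ ∫ s, (∏ j, ‖v j‖) * ((k.factorial : ℝ) * (Real.exp ‖s‖ * ‖w s‖)) := by
            refine integral_mono (hw1 k v).norm
              (((hw2.const_mul (k.factorial : ℝ)).const_mul (∏ j, ‖v j‖))) (fun s => ?_)
            rw [norm_mul, Complex.norm_real, Real.norm_eq_abs]
            calc |hkL n k s v| * ‖w s‖ ≤ ((∏ j, ‖v j‖) * ‖s‖ ^ k) * ‖w s‖ :=
                mul_le_mul_of_nonneg_right (hkL_bound n k s v) (norm_nonneg _)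
              _ ≤ ((∏ j, ‖v j‖) * ((k.factorial : ℝ) * Real.exp ‖s‖)) * ‖w s‖ := by
                  refine mul_le_mul_of_nonneg_right
                    (mul_le_mul_of_nonneg_left (hk_pow_le_exp (norm_nonneg s) k) hprod)
                    (norm_nonneg _)
              _ = (∏ j, ‖v j‖) * ((k.factorial : ℝ) * (Real.exp ‖s‖ * ‖w s‖)) := by ring
        _ = ((k.factorial : ℝ) * ∫ s, Real.exp ‖s‖ * ‖w s‖) * ∏ j, ‖v j‖ := by
            rw [integral_const_mul, integral_const_mul]
            ring)

lemma hkCMM_apply (n k : ℕ) (w : HKV n → ℂ) (hw1) (hw2) (v : Fin k → HKV n) :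
    hkCMM n k w hw1 hw2 v = ∫ s, ((hkL n k s v : ℝ) : ℂ) * w s := rfl

lemma hkCMM_norm_le (n k : ℕ) (w : HKV n → ℂ) (hw1) (hw2) :
    ‖hkCMM n k w hw1 hw2‖ ≤ (k.factorial : ℝ) * ∫ s, Real.exp ‖s‖ * ‖w s‖ := by
  refine MultilinearMap.mkContinuous_norm_le _ ?_ _
  have : (0:ℝ) ≤ ∫ s, Real.exp ‖s‖ * ‖w s‖ :=
    integral_nonneg fun s => by positivity
  positivity

theorem heatKernel_contDiff (n m : ℕ) (hn : 1 ≤ n) (hm : 1 ≤ m) (a : ℝ) (ha : 0 < a) :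
    ContDiff ℝ (⊤ : ℕ∞) (heatKernel n m a) := by
  -- the Gaussian dominator is integrable
  have hGauss : Integrable (fun s : HKV n => Real.exp (-(a / 2 * ‖s‖ ^ 2))) := by
    have hg : Integrable (fun v : HKV n =>
        Complex.exp (-((a:ℂ)/2) * (‖v‖:ℂ) ^ 2 + 0 * ((inner ℝ (0 : HKV n) v : ℝ) : ℂ))) :=
      GaussianFourier.integrable_cexp_neg_mul_sq_norm_add_of_euclideanSpace
        (by simp; positivity) 0 0
    have h := hg.norm
    refine h.congr (Filter.Eventually.of_forall fun v => ?_)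
    simp only [Complex.norm_exp]
    rw [show (-((a:ℂ)/2) * ((‖v‖:ℝ):ℂ) ^ 2 + 0 * ((inner ℝ (0:HKV n) v : ℝ):ℂ))
          = ((-(a/2 * ‖v‖^2) : ℝ) : ℂ) by push_cast; ring,
      Complex.ofReal_re]
  -- analyticity of the integral
  have hG : AnalyticOnNhd ℝ (fun x : HKV n =>
      ∫ s : HKV n, Complex.exp (Complex.I * ((inner ℝ x s : ℝ) : ℂ) -
        (a : ℂ) * ((‖s‖ : ℝ) : ℂ) ^ (2 * m))) Set.univ := by
    intro x₀ _
    set w : HKV n → ℂ := fun s => Complex.exp (Complex.I * ((inner ℝ x₀ s : ℝ) : ℂ) -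
        (a : ℂ) * ((‖s‖ : ℝ) : ℂ) ^ (2 * m)) with hw_def
    have hw_norm : ∀ s : HKV n, ‖w s‖ = Real.exp (-(a * ‖s‖ ^ (2 * m))) := by
      intro s
      rw [hw_def]
      simp only [Complex.norm_exp]
      congr 1
      simp [Complex.sub_re, Complex.mul_re, Complex.I_re, Complex.I_im, Complex.ofReal_re,
        Complex.ofReal_im, ← Complex.ofReal_pow]
    have hw_cont : Continuous w := by
      rw [hw_def]
      refine Complex.continuous_exp.comp (Continuous.sub ?_ ?_)
      · exact continuous_const.mul (Complex.continuous_ofReal.comp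
          (continuous_const.inner continuous_id))
      · exact continuous_const.mul ((Complex.continuous_ofReal.comp continuous_norm).pow _)
    -- master integrable dominator
    have hw2 : Integrable (fun s : HKV n => Real.exp ‖s‖ * ‖w s‖) := by
      refine (hGauss.const_mul (Real.exp (a + 1 / (2 * a)))).mono' ?_ ?_
      · exact ((Real.continuous_exp.comp continuous_norm).mul hw_cont.norm).aestronglyMeasurable
      · filter_upwards with s
        rw [Real.norm_eq_abs, _root_.abs_of_nonneg (by positivity), hw_norm s]
        exact hk_exp_bound hm ha (norm_nonneg s)
    have hC₀ : (0:ℝ) ≤ ∫ s, Real.exp ‖s‖ * ‖w s‖ := integral_nonneg fun s => by positivity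
    -- integrability of the multilinear integrands
    have hw1 : ∀ (k : ℕ) (v : Fin k → HKV n),
        Integrable (fun s => ((hkL n k s v : ℝ) : ℂ) * w s) := by
      intro k v
      have hprod : (0:ℝ) ≤ ∏ j, ‖v j‖ := Finset.prod_nonneg fun j _ => norm_nonneg _
      refine ((hw2.const_mul (k.factorial : ℝ)).const_mul (∏ j, ‖v j‖)).mono' ?_ ?_
      · refine Continuous.aestronglyMeasurable (Continuous.mul ?_ hw_cont)
        refine Complex.continuous_ofReal.comp ?_
        simp only [hkL_apply]
        exact continuous_finset_prod _ fun j _ => continuous_id.inner continuous_const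
      · filter_upwards with s
        rw [norm_mul, Complex.norm_real, Real.norm_eq_abs]
        calc |hkL n k s v| * ‖w s‖ ≤ ((∏ j, ‖v j‖) * ‖s‖ ^ k) * ‖w s‖ :=
            mul_le_mul_of_nonneg_right (hkL_bound n k s v) (norm_nonneg _)
          _ ≤ ((∏ j, ‖v j‖) * ((k.factorial : ℝ) * Real.exp ‖s‖)) * ‖w s‖ := by
              refine mul_le_mul_of_nonneg_right
                (mul_le_mul_of_nonneg_left (hk_pow_le_exp (norm_nonneg s) k) hprod)
                (norm_nonneg _)
          _ = (∏ j, ‖v j‖) * ((k.factorial : ℝ) * (Real.exp ‖s‖ * ‖w s‖)) := by ring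
    -- the power series
    set P : FormalMultilinearSeries ℝ (HKV n) ℂ :=
      fun k => (Complex.I ^ k * ((k.factorial : ℂ))⁻¹) • hkCMM n k w hw1 hw2 with hP_def
    have hPnorm : ∀ k, ‖P k‖ ≤ ∫ s, Real.exp ‖s‖ * ‖w s‖ := by
      intro k
      have hk : (0:ℝ) < (k.factorial : ℝ) := by positivity
      have h2 : ‖Complex.I ^ k * ((k.factorial : ℂ))⁻¹‖ = (k.factorial : ℝ)⁻¹ := by
        rw [norm_mul, norm_pow, Complex.norm_I, one_pow, one_mul, norm_inv,
          Complex.norm_natCast]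
      calc ‖P k‖ ≤ ‖Complex.I ^ k * ((k.factorial : ℂ))⁻¹‖ * ‖hkCMM n k w hw1 hw2‖ := by
            rw [hP_def]
            exact ContinuousMultilinearMap.opNorm_smul_le _ _
        _ = (k.factorial : ℝ)⁻¹ * ‖hkCMM n k w hw1 hw2‖ := by rw [h2]
        _ ≤ (k.factorial : ℝ)⁻¹ * ((k.factorial : ℝ) * ∫ s, Real.exp ‖s‖ * ‖w s‖) :=
            mul_le_mul_of_nonneg_left (hkCMM_norm_le n k w hw1 hw2) (by positivity)
        _ = ∫ s, Real.exp ‖s‖ * ‖w s‖ := by field_simp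
    refine ⟨P, 1, ?_, one_pos, ?_⟩
    · -- radius bound
      have := P.le_radius_of_bound (∫ s, Real.exp ‖s‖ * ‖w s‖) (r := 1)
        (fun k => by simpa using hPnorm k)
      simpa using this
    · -- HasSum
      intro y hy
      have hy' : ‖y‖ < 1 := by
        have := mem_emetric_ball_zero_iff.mp hy
        exact_mod_cast (show (‖y‖₊ : ENNReal) < 1 from this)
      set F : ℕ → HKV n → ℂ := fun k s =>
        (Complex.I ^ k * ((k.factorial : ℂ))⁻¹) *
          (((hkL n k s fun _ => y : ℝ) : ℂ) * w s) with hF_def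
      have hF_int : ∀ k, Integrable (F k) := fun k =>
        (hw1 k (fun _ => y)).const_mul _
      have hF_bound : ∀ k, (∫ s, ‖F k s‖) ≤ ‖y‖ ^ k * ∫ s, Real.exp ‖s‖ * ‖w s‖ := by
        intro k
        have hmono : ∀ s : HKV n, ‖F k s‖ ≤ ‖y‖ ^ k * (Real.exp ‖s‖ * ‖w s‖) := by
          intro s
          rw [hF_def]
          simp only [norm_mul, Complex.norm_real, Real.norm_eq_abs, norm_pow, Complex.norm_I,
            one_pow, one_mul, norm_inv, Complex.norm_natCast]
          have hb := hkL_bound n k s (fun _ => y)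
          have hb' : |hkL n k s fun _ => y| ≤ ‖y‖ ^ k * ‖s‖ ^ k := by
            simpa [Finset.prod_const, Finset.card_univ] using hb
          have hk : (0:ℝ) < (k.factorial : ℝ) := by positivity
          have h3 : (k.factorial : ℝ)⁻¹ * ‖s‖ ^ k ≤ Real.exp ‖s‖ := by
            rw [inv_mul_eq_div]
            exact hk_pow_div_factorial_le_exp (norm_nonneg s) k
          calc (k.factorial : ℝ)⁻¹ * (|hkL n k s fun _ => y| * ‖w s‖)
              ≤ (k.factorial : ℝ)⁻¹ * ((‖y‖ ^ k * ‖s‖ ^ k) * ‖w s‖) := by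
                refine mul_le_mul_of_nonneg_left
                  (mul_le_mul_of_nonneg_right hb' (norm_nonneg _)) (by positivity)
            _ = ‖y‖ ^ k * (((k.factorial : ℝ)⁻¹ * ‖s‖ ^ k) * ‖w s‖) := by ring
            _ ≤ ‖y‖ ^ k * (Real.exp ‖s‖ * ‖w s‖) := by
                refine mul_le_mul_of_nonneg_left
                  (mul_le_mul_of_nonneg_right h3 (norm_nonneg _)) (by positivity)
        calc (∫ s, ‖F k s‖) ≤ ∫ s, ‖y‖ ^ k * (Real.exp ‖s‖ * ‖w s‖) :=
            integral_mono (hF_int k).norm (hw2.const_mul _) hmono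
          _ = ‖y‖ ^ k * ∫ s, Real.exp ‖s‖ * ‖w s‖ := integral_const_mul _ _
      have hF_sum : Summable fun k => ∫ s, ‖F k s‖ := by
        refine Summable.of_nonneg_of_le
          (fun k => integral_nonneg fun s => norm_nonneg _) hF_bound ?_
        exact (summable_geometric_of_lt_one (norm_nonneg y) hy').mul_right _
      have hsum := hasSum_integral_of_summable_integral_norm hF_int hF_sum
      -- identify the sum of the series pointwise
      have h2 : (∫ s, ∑' k, F k s) = ∫ s : HKV n,
          Complex.exp (Complex.I * ((inner ℝ (x₀ + y) s : ℝ) : ℂ) -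
            (a : ℂ) * ((‖s‖ : ℝ) : ℂ) ^ (2 * m)) := by
        refine integral_congr_ae (Filter.Eventually.of_forall fun s => ?_)
        beta_reduce
        have hExp : HasSum (fun k => (Complex.I * ((inner ℝ y s : ℝ) : ℂ)) ^ k / k.factorial)
            (Complex.exp (Complex.I * ((inner ℝ y s : ℝ) : ℂ))) := by
          rw [Complex.exp_eq_exp_ℂ]
          exact NormedSpace.expSeries_div_hasSum_exp _
        have hExp' : HasSum (fun k => F k s)
            (Complex.exp (Complex.I * ((inner ℝ y s : ℝ) : ℂ)) * w s) := by
          have h := hExp.mul_right (w s)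
          have hfe : (fun k => (Complex.I * ((inner ℝ y s : ℝ) : ℂ)) ^ k / k.factorial * w s)
              = fun k => F k s := by
            funext k
            rw [hF_def]
            simp only [hkL_apply, Finset.prod_const, Finset.card_univ, Fintype.card_fin]
            rw [mul_pow, real_inner_comm s y]
            push_cast
            ring
          rwa [hfe] at h
        rw [hExp'.tsum_eq, hw_def]
        rw [← Complex.exp_add]
        congr 1
        have : (inner ℝ (x₀ + y) s : ℝ) = (inner ℝ x₀ s : ℝ) + (inner ℝ y s : ℝ) :=
          inner_add_left x₀ y s
        rw [this]
        push_cast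
        ring
      have hsum' : HasSum (fun k => ∫ s, F k s) (∫ s : HKV n,
          Complex.exp (Complex.I * ((inner ℝ (x₀ + y) s : ℝ) : ℂ) -
            (a : ℂ) * ((‖s‖ : ℝ) : ℂ) ^ (2 * m))) := by
        rw [← h2]
        exact hsum
      convert hsum' using 2 with k
      case e'_3 => rfl
      rw [hP_def]
      simp only [ContinuousMultilinearMap.smul_apply, hkCMM_apply, smul_eq_mul]
      rw [← integral_const_mul]
  -- conclude
  have hHK : AnalyticOnNhd ℝ (heatKernel n m a) Set.univ := by
    intro x hx
    exact (analyticAt_const (v := (((2 * Real.pi) ^ n : ℝ)⁻¹))).smul (hG x hx)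
  exact hHK.contDiff
end

section
/- Let n ≥ 1 and m ≥ 1 be integers, let a > 0 be a real number, and let k ≥ 0 be an integer. Then the k-th iterated Laplacian of the polyharmonic heat kernel satisfies (Δ^[k] E_{m,a})(x) = (2π)^{−n} ∫_{ℝⁿ} (−‖s‖²)^k · exp(i⟨x,s⟩ − a‖s‖^{2m}) ds for every x ∈ ℝⁿ; in particular ((−Δ)^m E_{m,a})(x) = (2π)^{−n} ∫_{ℝⁿ} ‖s‖^{2m} exp(i⟨x,s⟩ − a‖s‖^{2m}) ds. -/
open MeasureTheory Real Complex

noncomputable def Laplacian' {n : ℕ} {F : Type*} [NormedAddCommGroup F] [NormedSpace ℝ F]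
    (f : EuclideanSpace ℝ (Fin n) → F) : EuclideanSpace ℝ (Fin n) → F :=
  fun x => ∑ i : Fin n,
    fderiv ℝ (fun y => fderiv ℝ f y (EuclideanSpace.single i 1)) x (EuclideanSpace.single i 1)

/-! Write `E_{m,a}` as `x ↦ ∫ φ(s) e^{i⟨x,s⟩} ds` with `φ(s) = (2π)^{-n} e^{-a‖s‖^{2m}}`. Since
`φ` decays faster than any power of `‖s‖`, one may differentiate under the integral sign, which
turns `∂/∂xᵢ` into multiplication of `φ` by `i sᵢ`; hence `Δ` becomes multiplication by `-‖s‖²`.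
Multiplying by a polynomially bounded factor preserves the decay of `φ`, so this iterates. -/

section OscillatoryIntegral

variable {V : Type*} [NormedAddCommGroup V]

noncomputable def oscillatoryIntegral [InnerProductSpace ℝ V] [MeasurableSpace V]
    (μ : Measure V) (φ : V → ℂ) (x : V) : ℂ :=
  ∫ s, φ s * exp (I * (inner ℝ x s : ℝ)) ∂μ

def HasIntegrableMoments [MeasurableSpace V] (μ : Measure V) (φ : V → ℂ) : Prop :=
  ∀ p : ℕ, Integrable (fun s => ‖s‖ ^ p • φ s) μ

theorem norm_smul_ofRealCLM_comp_innerSL_le [InnerProductSpace ℝ V] (z : ℂ) (s : V) :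
    ‖z • ofRealCLM.comp (innerSL ℝ s)‖ ≤ ‖s‖ * ‖z‖ := by
  rw [norm_smul, mul_comm]
  gcongr
  exact (ofRealCLM.opNorm_comp_le _).trans (by rw [ofRealCLM_norm, innerSL_apply_norm, one_mul])

theorem hasFDerivAt_mul_exp_I_inner [InnerProductSpace ℝ V] (z : ℂ) (s x : V) :
    HasFDerivAt (fun y : V => z * exp (I * (inner ℝ y s : ℝ)))
      ((I * exp (I * (inner ℝ x s : ℝ)) * z) • ofRealCLM.comp (innerSL ℝ s)) x := by
  have hinner : HasFDerivAt (fun y : V => ((inner ℝ y s : ℝ) : ℂ))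
      (ofRealCLM.comp (innerSL ℝ s)) x := by
    simp_rw [real_inner_comm s]
    exact ofRealCLM.hasFDerivAt.comp x (innerSL ℝ s).hasFDerivAt
  refine ((hinner.const_mul I).cexp.const_mul z).congr_fderiv ?_
  rw [smul_smul, smul_smul]
  congr 1
  ring

namespace HasIntegrableMoments

variable [MeasurableSpace V] {μ : Measure V} {φ : V → ℂ}

theorem integrable (hφ : HasIntegrableMoments μ φ) : Integrable φ μ := by
  simpa using hφ 0

theorem integrable_norm_mul (hφ : HasIntegrableMoments μ φ) :
    Integrable (fun s => ‖s‖ * ‖φ s‖) μ := by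
  simpa [norm_smul] using (hφ 1).norm

theorem mul [OpensMeasurableSpace V] {ψ : V → ℂ} (hφ : HasIntegrableMoments μ φ)
    (hψ : Continuous ψ) {C : ℝ} {q : ℕ} (hψC : ∀ s, ‖ψ s‖ ≤ C * ‖s‖ ^ q) :
    HasIntegrableMoments μ (fun s => ψ s * φ s) := by
  intro p
  refine ((hφ (p + q)).norm.const_mul C).mono' ((continuous_norm.pow p).aestronglyMeasurable.smul
    (hψ.aestronglyMeasurable.mul hφ.integrable.1)) (.of_forall fun s => ?_)
  calc ‖‖s‖ ^ p • (ψ s * φ s)‖ = ‖s‖ ^ p * ‖ψ s‖ * ‖φ s‖ := by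
        rw [norm_smul, norm_mul, norm_pow, norm_norm, mul_assoc]
    _ ≤ ‖s‖ ^ p * (C * ‖s‖ ^ q) * ‖φ s‖ := by gcongr; exact hψC s
    _ = C * ‖‖s‖ ^ (p + q) • φ s‖ := by
        rw [norm_smul, norm_pow, norm_norm, pow_add]; ring

variable [InnerProductSpace ℝ V] [OpensMeasurableSpace V]

theorem mul_inner (hφ : HasIntegrableMoments μ φ) (v : V) :
    HasIntegrableMoments μ (fun s => I * (inner ℝ s v : ℝ) * φ s) :=
  hφ.mul (C := ‖v‖) (q := 1) (by fun_prop) fun s => by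
    simpa [mul_comm ‖v‖] using abs_real_inner_le_norm s v

theorem I_mul_exp_I_inner_mul (hφ : HasIntegrableMoments μ φ) (x : V) :
    HasIntegrableMoments μ (fun s => I * exp (I * (inner ℝ x s : ℝ)) * φ s) :=
  hφ.mul (C := 1) (q := 0) (by fun_prop) fun s => by simp [norm_exp_I_mul_ofReal]

theorem integrable_mul_exp_I_inner (hφ : HasIntegrableMoments μ φ) (x : V) :
    Integrable (fun s => φ s * exp (I * (inner ℝ x s : ℝ))) μ :=
  hφ.integrable.mul_bdd (c := 1) (by fun_prop) (.of_forall fun s => (norm_exp_I_mul_ofReal _).le)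

theorem integrable_smul_ofRealCLM_comp_innerSL [SecondCountableTopology V]
    (hφ : HasIntegrableMoments μ φ) :
    Integrable (fun s => φ s • ofRealCLM.comp (innerSL ℝ s)) μ :=
  hφ.integrable_norm_mul.mono' (hφ.integrable.1.smul (by fun_prop : Continuous fun s : V =>
    ofRealCLM.comp (innerSL ℝ s)).aestronglyMeasurable)
    (.of_forall fun s => norm_smul_ofRealCLM_comp_innerSL_le _ s)

end HasIntegrableMoments

variable [InnerProductSpace ℝ V] [MeasurableSpace V] [BorelSpace V] [SecondCountableTopology V]
  {μ : Measure V} {φ : V → ℂ}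

theorem hasFDerivAt_oscillatoryIntegral (hφ : HasIntegrableMoments μ φ) (x : V) :
    HasFDerivAt (oscillatoryIntegral μ φ)
      (∫ s, (I * exp (I * (inner ℝ x s : ℝ)) * φ s) • ofRealCLM.comp (innerSL ℝ s) ∂μ) x := by
  refine hasFDerivAt_integral_of_dominated_of_fderiv_le (Metric.ball_mem_nhds x one_pos)
    (.of_forall fun y => (hφ.integrable_mul_exp_I_inner y).1) (hφ.integrable_mul_exp_I_inner x)
    (hφ.I_mul_exp_I_inner_mul x).integrable_smul_ofRealCLM_comp_innerSL.1
    (.of_forall fun s y _ => ?_) hφ.integrable_norm_mul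
    (.of_forall fun s y _ => hasFDerivAt_mul_exp_I_inner (φ s) s y)
  refine (norm_smul_ofRealCLM_comp_innerSL_le _ s).trans_eq ?_
  rw [norm_mul, norm_mul, norm_I, one_mul, norm_exp_I_mul_ofReal, one_mul]

theorem fderiv_oscillatoryIntegral_apply (hφ : HasIntegrableMoments μ φ) (x v : V) :
    fderiv ℝ (oscillatoryIntegral μ φ) x v =
      oscillatoryIntegral μ (fun s => I * (inner ℝ s v : ℝ) * φ s) x := by
  rw [(hasFDerivAt_oscillatoryIntegral hφ x).fderiv, ContinuousLinearMap.integral_apply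
    (hφ.I_mul_exp_I_inner_mul x).integrable_smul_ofRealCLM_comp_innerSL]
  refine integral_congr_ae (.of_forall fun s => ?_)
  simp only [smul_apply, ContinuousLinearMap.comp_apply, innerSL_apply_apply, ofRealCLM_apply,
    smul_eq_mul]
  ring

end OscillatoryIntegral

section Decay

variable {E : Type*} [NormedAddCommGroup E] [NormedSpace ℝ E] [FiniteDimensional ℝ E]
  [MeasurableSpace E] [BorelSpace E] [Nontrivial E] (μ : Measure E) [μ.IsAddHaarMeasure]
  {a : ℝ} {q : ℕ}

theorem integrable_norm_pow_mul_exp_neg_mul_norm_pow (ha : 0 < a) (hq : 0 < q) (p : ℕ) :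
    Integrable (fun x => ‖x‖ ^ p * Real.exp (-a * ‖x‖ ^ q)) μ := by
  refine (integrable_fun_norm_addHaar μ (f := fun y => y ^ p * Real.exp (-a * y ^ q))).2 ?_
  refine (integrableOn_rpow_mul_exp_neg_mul_rpow (s := (Module.finrank ℝ E - 1 + p : ℕ))
    (neg_one_lt_zero.trans_le (Nat.cast_nonneg _)) (Nat.cast_pos.2 hq) ha).congr_fun
    (fun y _ => ?_) measurableSet_Ioi
  simp only [Real.rpow_natCast, smul_eq_mul, pow_add]
  ring

theorem hasIntegrableMoments_exp_neg_mul_norm_pow (ha : 0 < a) (hq : 0 < q) :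
    HasIntegrableMoments μ (fun x => exp (-(a : ℂ) * ((‖x‖ : ℝ) : ℂ) ^ q)) := by
  intro p
  refine (integrable_norm_iff (by fun_prop)).1 ?_
  refine (integrable_norm_pow_mul_exp_neg_mul_norm_pow μ ha hq p).congr (.of_forall fun x => ?_)
  dsimp only
  rw [norm_smul, norm_pow, norm_norm, ← ofReal_pow, ← ofReal_neg, ← ofReal_mul, norm_exp_ofReal,
    neg_mul]

end Decay

section Euclidean

variable {n : ℕ}

theorem laplacian_oscillatoryIntegral {φ : EuclideanSpace ℝ (Fin n) → ℂ}
    (hφ : HasIntegrableMoments volume φ) :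
    Laplacian' (oscillatoryIntegral volume φ) =
      oscillatoryIntegral volume (fun s => -((‖s‖ : ℝ) : ℂ) ^ 2 * φ s) := by
  funext x
  have hpartial (i : Fin n) :
      (fun y => fderiv ℝ (oscillatoryIntegral volume φ) y (EuclideanSpace.single i 1)) =
        oscillatoryIntegral volume
          (fun s => I * (inner ℝ s (EuclideanSpace.single i 1) : ℝ) * φ s) :=
    funext fun y => fderiv_oscillatoryIntegral_apply hφ y _
  simp only [Laplacian', hpartial, fderiv_oscillatoryIntegral_apply (hφ.mul_inner _)]
  unfold oscillatoryIntegral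
  rw [← integral_finsetSum _ fun i _ =>
    ((hφ.mul_inner _).mul_inner _).integrable_mul_exp_I_inner x]
  refine integral_congr_ae (.of_forall fun s => ?_)
  simp only [EuclideanSpace.inner_single_right, conj_trivial, one_mul]
  rw [← ofReal_pow, EuclideanSpace.real_norm_sq_eq, ofReal_sum, neg_mul, neg_mul, Finset.sum_mul,
    Finset.sum_mul, ← Finset.sum_neg_distrib]
  refine Finset.sum_congr rfl fun i _ => ?_
  push_cast
  linear_combination ((s i : ℂ) ^ 2 * φ s * exp (I * (inner ℝ x s : ℝ))) * I_sq

theorem iterate_laplacian_oscillatoryIntegral {φ : EuclideanSpace ℝ (Fin n) → ℂ}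
    (hφ : HasIntegrableMoments volume φ) (k : ℕ) :
    Laplacian'^[k] (oscillatoryIntegral volume φ) =
      oscillatoryIntegral volume (fun s => (-((‖s‖ : ℝ) : ℂ) ^ 2) ^ k * φ s) := by
  induction k with
  | zero => simp
  | succ k ih =>
    have hφk : HasIntegrableMoments volume (fun s => (-((‖s‖ : ℝ) : ℂ) ^ 2) ^ k * φ s) :=
      hφ.mul (C := 1) (q := 2 * k) (by fun_prop) fun s => by simp [pow_mul]
    rw [Function.iterate_succ_apply', ih, laplacian_oscillatoryIntegral hφk]
    simp only [pow_succ', mul_assoc]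

theorem heatKernel_eq_oscillatoryIntegral (m : ℕ) (a : ℝ) :
    heatKernel n m a = oscillatoryIntegral volume
      (fun s => (((2 * π) ^ n : ℝ)⁻¹ : ℂ) * exp (-(a : ℂ) * ((‖s‖ : ℝ) : ℂ) ^ (2 * m))) := by
  funext x
  rw [heatKernel, oscillatoryIntegral, ← integral_smul]
  congr 1 with s
  rw [mul_assoc, ← Complex.exp_add, real_smul, ofReal_inv]
  congr 2
  ring

theorem iterate_laplacian_heatKernel (hn : 1 ≤ n) {m : ℕ} (hm : 1 ≤ m) {a : ℝ} (ha : 0 < a)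
    (k : ℕ) (x : EuclideanSpace ℝ (Fin n)) :
    (Laplacian'^[k] (heatKernel n m a)) x =
      ((2 * Real.pi) ^ n : ℝ)⁻¹ •
        ∫ s : EuclideanSpace ℝ (Fin n),
          (-((‖s‖ : ℝ) : ℂ) ^ 2) ^ k *
            Complex.exp (Complex.I * ((inner ℝ x s : ℝ) : ℂ) -
              (a : ℂ) * ((‖s‖ : ℝ) : ℂ) ^ (2 * m)) := by
  have : Nonempty (Fin n) := ⟨⟨0, hn⟩⟩
  have hφ : HasIntegrableMoments volume (fun s : EuclideanSpace ℝ (Fin n) =>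
      (((2 * π) ^ n : ℝ)⁻¹ : ℂ) * exp (-(a : ℂ) * ((‖s‖ : ℝ) : ℂ) ^ (2 * m))) :=
    (hasIntegrableMoments_exp_neg_mul_norm_pow volume ha (by omega)).mul (q := 0)
      continuous_const fun _ => by rw [pow_zero, mul_one]
  rw [heatKernel_eq_oscillatoryIntegral, iterate_laplacian_oscillatoryIntegral hφ,
    oscillatoryIntegral, ← integral_smul]
  congr 1 with s
  rw [real_smul, ofReal_inv, sub_eq_neg_add, Complex.exp_add, ← neg_mul]
  ring

end Euclidean

theorem heatKernel_iteratedLaplacian (n m : ℕ) (hn : 1 ≤ n) (hm : 1 ≤ m) (a : ℝ) (ha : 0 < a)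
    (k : ℕ) :
    (∀ x : EuclideanSpace ℝ (Fin n),
      (Laplacian'^[k] (heatKernel n m a)) x =
        ((2 * Real.pi) ^ n : ℝ)⁻¹ •
          ∫ s : EuclideanSpace ℝ (Fin n),
            (-((‖s‖ : ℝ) : ℂ) ^ 2) ^ k *
              Complex.exp (Complex.I * ((inner ℝ x s : ℝ) : ℂ) -
                (a : ℂ) * ((‖s‖ : ℝ) : ℂ) ^ (2 * m))) ∧
    (∀ x : EuclideanSpace ℝ (Fin n),
      (-1 : ℂ) ^ m * (Laplacian'^[m] (heatKernel n m a)) x =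
        ((2 * Real.pi) ^ n : ℝ)⁻¹ •
          ∫ s : EuclideanSpace ℝ (Fin n),
            ((‖s‖ : ℝ) : ℂ) ^ (2 * m) *
              Complex.exp (Complex.I * ((inner ℝ x s : ℝ) : ℂ) -
                (a : ℂ) * ((‖s‖ : ℝ) : ℂ) ^ (2 * m))) := by
  refine ⟨iterate_laplacian_heatKernel hn hm ha k, fun x => ?_⟩
  rw [iterate_laplacian_heatKernel hn hm ha m, mul_smul_comm, ← integral_const_mul]
  congr 2 with s
  rw [← mul_assoc, ← mul_pow, neg_one_mul, neg_neg, ← pow_mul]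
end

section
/- Let n ≥ 1 and m ≥ 1 be integers and fix x ∈ ℝⁿ. Then the function a ↦ E_{m,a}(x) is differentiable on (0, ∞), with derivative at each a > 0 equal to −(2π)^{−n} ∫_{ℝⁿ} ‖s‖^{2m} · exp(i⟨x,s⟩ − a‖s‖^{2m}) ds. -/
open MeasureTheory Real Complex

/-! Differentiation under the integral sign. The `b`-derivative of the integrand is
`-‖s‖^{2m}` times the integrand, and for `b` within `a/2` of `a` its modulus is dominated by
`‖s‖^{2m} e^{-(a/2)‖s‖^{2m}}`, which is integrable on `ℝⁿ`: in polar coordinates this is a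
convergent Gamma-type integral. -/

theorem integrable_norm_pow_mul_exp_neg_mul_norm_pow_s7 {E : Type*} [NormedAddCommGroup E]
    [NormedSpace ℝ E] [FiniteDimensional ℝ E] [MeasurableSpace E] [BorelSpace E]
    (μ : Measure E) [μ.IsAddHaarMeasure] (j : ℕ) {k : ℕ} (hk : 0 < k) {b : ℝ} (hb : 0 < b) :
    Integrable (fun x : E => ‖x‖ ^ j * rexp (-b * ‖x‖ ^ k)) μ := by
  rcases subsingleton_or_nontrivial E with _ | _
  · exact .of_finite
  rw [integrable_fun_norm_addHaar μ (f := fun y => y ^ j * rexp (-b * y ^ k))]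
  have hk' : (0 : ℝ) < k := by exact_mod_cast hk
  refine (integrableOn_rpow_mul_exp_neg_mul_rpow (s := ((Module.finrank ℝ E - 1 + j : ℕ) : ℝ))
    (neg_one_lt_zero.trans_le (Nat.cast_nonneg _)) hk' hb).congr_fun
    (fun y _ => ?_) measurableSet_Ioi
  simp only [Real.rpow_natCast, smul_eq_mul, pow_add]
  ring

theorem norm_cexp_I_mul_sub_mul (θ b φ : ℝ) : ‖cexp (I * θ - b * φ)‖ = rexp (-b * φ) := by
  simp [Complex.norm_exp]

theorem hasDerivAt_cexp_I_mul_sub_mul (θ φ b : ℝ) :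
    HasDerivAt (fun c : ℝ => cexp (I * θ - c * φ)) (-φ * cexp (I * θ - b * φ)) b := by
  have h := (((hasDerivAt_id (b : ℂ)).mul_const (φ : ℂ)).const_sub (I * θ)).cexp.comp_ofReal
  simpa [mul_comm] using h

theorem hasDerivAt_integral_cexp_I_mul_sub_mul {α : Type*} [MeasurableSpace α] {μ : Measure α}
    {θ φ : α → ℝ} (hθ : AEStronglyMeasurable θ μ) (hφ : AEStronglyMeasurable φ μ)
    (hφ_nonneg : ∀ᵐ s ∂μ, 0 ≤ φ s) {a δ : ℝ} (hδ : δ < a)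
    (h_int : Integrable (fun s => rexp (-a * φ s)) μ)
    (h_bound : Integrable (fun s => φ s * rexp (-δ * φ s)) μ) :
    HasDerivAt (fun b : ℝ => ∫ s, cexp (I * θ s - b * φ s) ∂μ)
      (-∫ s, φ s * cexp (I * θ s - a * φ s) ∂μ) a := by
  have hmeas : ∀ b : ℝ, AEStronglyMeasurable (fun s => cexp (I * θ s - b * φ s)) μ := fun b =>
    continuous_exp.comp_aestronglyMeasurable
      ((continuous_ofReal.comp_aestronglyMeasurable hθ).const_mul I |>.sub
        ((continuous_ofReal.comp_aestronglyMeasurable hφ).const_mul (b : ℂ)))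
  have hF_int : Integrable (fun s => cexp (I * θ s - a * φ s)) μ :=
    h_int.mono' (hmeas a) (.of_forall fun s => (norm_cexp_I_mul_sub_mul _ _ _).le)
  have h_deriv_le : ∀ᵐ s ∂μ, ∀ b ∈ Metric.ball a (a - δ),
      ‖-(φ s : ℂ) * cexp (I * θ s - b * φ s)‖ ≤ φ s * rexp (-δ * φ s) := by
    filter_upwards [hφ_nonneg] with s hs b hb
    have hδb : δ ≤ b := by
      rw [Metric.mem_ball, Real.dist_eq, abs_lt] at hb
      linarith
    rw [norm_mul, norm_neg, norm_real, Real.norm_of_nonneg hs, norm_cexp_I_mul_sub_mul]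
    gcongr
  have key := hasDerivAt_integral_of_dominated_loc_of_deriv_le
    (Metric.ball_mem_nhds a (sub_pos.2 hδ)) (.of_forall hmeas) hF_int
    (((continuous_ofReal.comp_aestronglyMeasurable hφ).neg).mul (hmeas a)) h_deriv_le h_bound
    (.of_forall fun s b _ => hasDerivAt_cexp_I_mul_sub_mul (θ s) (φ s) b)
  simpa only [neg_mul, integral_neg] using key.2

theorem heatKernel_hasDerivAt_param_general (n m : ℕ) (hm : 1 ≤ m)
    (x : EuclideanSpace ℝ (Fin n)) :
    ∀ a : ℝ, 0 < a →
      HasDerivAt (fun b : ℝ => heatKernel n m b x)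
        (-(((2 * Real.pi) ^ n : ℝ)⁻¹ •
          ∫ s : EuclideanSpace ℝ (Fin n),
            ((‖s‖ : ℝ) : ℂ) ^ (2 * m) *
              Complex.exp (Complex.I * ((inner ℝ x s : ℝ) : ℂ) -
                (a : ℂ) * ((‖s‖ : ℝ) : ℂ) ^ (2 * m)))) a := by
  intro a ha
  have hk : 0 < 2 * m := by omega
  have h_int := integrable_norm_pow_mul_exp_neg_mul_norm_pow_s7
    (volume : Measure (EuclideanSpace ℝ (Fin n))) 0 hk ha
  have h_bound := integrable_norm_pow_mul_exp_neg_mul_norm_pow_s7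
    (volume : Measure (EuclideanSpace ℝ (Fin n))) (2 * m) hk (half_pos ha)
  simp only [pow_zero, one_mul] at h_int
  have key := hasDerivAt_integral_cexp_I_mul_sub_mul (θ := fun s => inner ℝ x s)
    (φ := fun s => ‖s‖ ^ (2 * m)) (by fun_prop) (by fun_prop) (.of_forall fun s => by positivity)
    (half_lt_self ha) h_int h_bound
  simpa only [heatKernel, ofReal_pow, smul_neg, Pi.smul_def] using
    key.const_smul ((2 * π) ^ n : ℝ)⁻¹

theorem heatKernel_hasDerivAt_param (n m : ℕ) (hn : 1 ≤ n) (hm : 1 ≤ m)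
    (x : EuclideanSpace ℝ (Fin n)) :
    ∀ a : ℝ, 0 < a →
      HasDerivAt (fun b : ℝ => heatKernel n m b x)
        (-(((2 * Real.pi) ^ n : ℝ)⁻¹ •
          ∫ s : EuclideanSpace ℝ (Fin n),
            ((‖s‖ : ℝ) : ℂ) ^ (2 * m) *
              Complex.exp (Complex.I * ((inner ℝ x s : ℝ) : ℂ) -
                (a : ℂ) * ((‖s‖ : ℝ) : ℂ) ^ (2 * m)))) a :=
  heatKernel_hasDerivAt_param_general n m hm x
end

section
/- Let n ≥ 1 and m ≥ 1 be integers, let T > 0, and let α : ℝ → ℝ be continuous. Define α₁(t) = ∫₀ᵗ α(s) ds and assume α₁(t) > 0 for all t ∈ (0, T]. Then for every fixed x ∈ ℝⁿ and every t ∈ (0, T), the function t ↦ E_{m,α₁(t)}(x) is differentiable at t with derivative −α(t) · ((−1)^m Δ^[m] E_{m,α₁(t)})(x); that is, it solves ∂_t u + α(t)(−Δ)^m u = 0. -/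
open MeasureTheory Real Complex

/-!
Every function `x ↦ ∫ w(s) exp(i⟨x,s⟩ - a‖s‖^p) ds` with a continuous, polynomially bounded
weight `w` may be differentiated under the integral sign, both in `x` and in `a > 0`: all the
derivatives of the integrand are dominated by `(1 + ‖s‖)^d exp(-a'‖s‖^p)` with `0 < a' ≤ a`,
which is integrable. Differentiating twice in `x` multiplies the weight by `-‖s‖²`, so
`(-Δ)^m` multiplies it by `‖s‖^(2m)`, which is exactly `-∂_a` for `p = 2m`. The chain rule with
`α₁' = α` (fundamental theorem of calculus) concludes.
-/
open Nat in
/-- Since `r ^ p ≥ r - 1`, `exp (-(a * r ^ p)) ≤ exp (2 * a) * exp (-(a * (1 + r)))`, and the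
exponential beats `(a * (1 + r)) ^ M` by the factor `M !`. -/
lemma one_add_pow_mul_exp_neg_mul_pow_le {a : ℝ} (ha : 0 < a) {p : ℕ} (hp : p ≠ 0) (M : ℕ)
    {r : ℝ} (hr : 0 ≤ r) :
    (1 + r) ^ M * Real.exp (-(a * r ^ p)) ≤ Real.exp (2 * a) * M ! / a ^ M := by
  have hrp : r - 1 ≤ r ^ p := by
    rcases le_total r 1 with h | h
    · linarith [pow_nonneg hr p]
    · linarith [le_self_pow₀ h hp]
  have hfac := Real.pow_div_factorial_le_exp (x := a * (1 + r)) (by positivity) M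
  rw [div_le_iff₀ (by positivity), mul_pow] at hfac
  calc (1 + r) ^ M * Real.exp (-(a * r ^ p))
      ≤ (1 + r) ^ M * Real.exp (2 * a - a * (1 + r)) := by gcongr; nlinarith
    _ = Real.exp (2 * a) * (a ^ M * (1 + r) ^ M) / a ^ M / Real.exp (a * (1 + r)) := by
        rw [Real.exp_sub]; field_simp
    _ ≤ Real.exp (2 * a) * (Real.exp (a * (1 + r)) * M !) / a ^ M / Real.exp (a * (1 + r)) := by
        gcongr Real.exp (2 * a) * ?_ / _ / _
    _ = Real.exp (2 * a) * M ! / a ^ M := by field_simp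

lemma integrable_one_add_norm_pow_mul_exp_neg_mul_norm_pow {E : Type*} [NormedAddCommGroup E]
    [NormedSpace ℝ E] [FiniteDimensional ℝ E] [MeasurableSpace E] [BorelSpace E]
    (μ : Measure E) [μ.IsAddHaarMeasure] {a : ℝ} (ha : 0 < a) {p : ℕ} (hp : p ≠ 0) (d : ℕ) :
    Integrable (fun s : E => (1 + ‖s‖) ^ d * Real.exp (-(a * ‖s‖ ^ p))) μ := by
  set N := Module.finrank ℝ E + 1
  have hdecay := (integrable_one_add_norm (μ := μ) (r := N) (by simp [N])).const_mul
    (Real.exp (2 * a) * (d + N).factorial / a ^ (d + N))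
  refine hdecay.mono' (by fun_prop) (ae_of_all _ fun s => ?_)
  have hs : 0 < 1 + ‖s‖ := by positivity
  rw [norm_of_nonneg (by positivity), rpow_neg hs.le, rpow_natCast, ← div_eq_mul_inv,
    le_div_iff₀ (by positivity)]
  calc _ = (1 + ‖s‖) ^ (d + N) * Real.exp (-(a * ‖s‖ ^ p)) := by ring
    _ ≤ _ := one_add_pow_mul_exp_neg_mul_pow_le ha hp _ (norm_nonneg s)

section PolyGrowth

variable {E : Type*} [NormedAddCommGroup E]

def HasPolyGrowth (w : E → ℂ) : Prop :=
  Continuous w ∧ ∃ (C : ℝ) (d : ℕ), ∀ s, ‖w s‖ ≤ C * (1 + ‖s‖) ^ d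

lemma hasPolyGrowth_const (c : ℂ) : HasPolyGrowth (fun _ : E => c) :=
  ⟨continuous_const, ‖c‖, 0, fun _ => by simp⟩

lemma hasPolyGrowth_norm_pow (k : ℕ) : HasPolyGrowth (fun s : E => ((‖s‖ : ℝ) : ℂ) ^ k) :=
  ⟨by fun_prop, 1, k, fun s => by
    rw [one_mul, norm_pow, Complex.norm_real, norm_norm]
    gcongr
    linarith⟩

lemma hasPolyGrowth_norm : HasPolyGrowth (fun s : E => ((‖s‖ : ℝ) : ℂ)) := by
  simpa using hasPolyGrowth_norm_pow (E := E) 1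

lemma HasPolyGrowth.neg {w : E → ℂ} (hw : HasPolyGrowth w) : HasPolyGrowth (fun s => -w s) :=
  let ⟨hc, C, d, hC⟩ := hw
  ⟨hc.neg, C, d, fun s => (norm_neg (w s)).trans_le (hC s)⟩

lemma HasPolyGrowth.mul {v w : E → ℂ} (hv : HasPolyGrowth v) (hw : HasPolyGrowth w) :
    HasPolyGrowth (fun s => v s * w s) := by
  obtain ⟨hvc, C, d, hC⟩ := hv
  obtain ⟨hwc, D, e, hD⟩ := hw
  refine ⟨hvc.mul hwc, C * D, d + e, fun s => ?_⟩
  calc ‖v s * w s‖ = ‖v s‖ * ‖w s‖ := norm_mul _ _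
    _ ≤ C * (1 + ‖s‖) ^ d * (D * (1 + ‖s‖) ^ e) :=
        mul_le_mul (hC s) (hD s) (norm_nonneg _) ((norm_nonneg _).trans (hC s))
    _ = C * D * (1 + ‖s‖) ^ (d + e) := by ring

lemma HasPolyGrowth.pow {w : E → ℂ} (hw : HasPolyGrowth w) (k : ℕ) :
    HasPolyGrowth (fun s => w s ^ k) := by
  induction k with
  | zero => simpa using hasPolyGrowth_const 1
  | succ k ih => simpa only [pow_succ] using ih.mul hw

end PolyGrowth

section WeightedHeatKernel

variable {E : Type*} [NormedAddCommGroup E] [InnerProductSpace ℝ E]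

lemma hasPolyGrowth_I_mul_inner (v : E) :
    HasPolyGrowth (fun s : E => I * ((inner ℝ s v : ℝ) : ℂ)) :=
  ⟨by fun_prop, ‖v‖, 1, fun s => by
    rw [norm_mul, Complex.norm_I, one_mul, Complex.norm_real, pow_one, mul_comm]
    exact (norm_inner_le_norm s v).trans (by gcongr; linarith)⟩

noncomputable def heatPhase (p : ℕ) (a : ℝ) (x s : E) : ℂ :=
  I * ((inner ℝ x s : ℝ) : ℂ) - (a : ℂ) * ((‖s‖ : ℝ) : ℂ) ^ p

noncomputable def heatPhaseDeriv (s : E) : E →L[ℝ] ℂ :=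
  I • ofRealCLM.comp (innerSL ℝ s)

variable {p : ℕ}

lemma norm_cexp_heatPhase (a : ℝ) (x s : E) :
    ‖cexp (heatPhase p a x s)‖ = Real.exp (-(a * ‖s‖ ^ p)) := by
  rw [Complex.norm_exp]
  simp [heatPhase, ← Complex.ofReal_pow]

lemma continuous_heatPhase (a : ℝ) (x : E) : Continuous (heatPhase p a x) := by
  unfold heatPhase; fun_prop

lemma hasFDerivAt_heatPhase (a : ℝ) (x s : E) :
    HasFDerivAt (fun y => heatPhase p a y s) (heatPhaseDeriv s) x := by
  have hinner : HasFDerivAt (fun y : E => inner ℝ y s) (innerSL ℝ s) x := by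
    have h : (fun y : E => inner ℝ y s) = innerSL ℝ s := funext fun y => real_inner_comm s y
    exact h ▸ (innerSL ℝ s).hasFDerivAt
  exact ((ofRealCLM.hasFDerivAt.comp x hinner).const_mul I).sub_const _

lemma hasDerivAt_heatPhase_param (a : ℝ) (x s : E) :
    HasDerivAt (fun b : ℝ => heatPhase p b x s) (-((‖s‖ : ℝ) : ℂ) ^ p) a := by
  have := ((hasDerivAt_id (a : ℂ)).comp_ofReal.mul_const (((‖s‖ : ℝ) : ℂ) ^ p)).const_sub
    (I * ((inner ℝ x s : ℝ) : ℂ))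
  exact this.congr_deriv (by simp)

lemma heatPhaseDeriv_apply (s v : E) : heatPhaseDeriv s v = I * ((inner ℝ s v : ℝ) : ℂ) := by
  simp [heatPhaseDeriv]

lemma norm_heatPhaseDeriv_le (s : E) : ‖heatPhaseDeriv s‖ ≤ ‖s‖ :=
  ContinuousLinearMap.opNorm_le_bound _ (norm_nonneg s) fun v => by
    rw [heatPhaseDeriv_apply, norm_mul, Complex.norm_I, one_mul, Complex.norm_real]
    exact norm_inner_le_norm s v

lemma continuous_heatPhaseDeriv : Continuous (heatPhaseDeriv : E → E →L[ℝ] ℂ) := by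
  unfold heatPhaseDeriv; fun_prop

lemma norm_mul_cexp_heatPhase_le {w : E → ℂ} {C : ℝ} {d : ℕ}
    (hC : ∀ s, ‖w s‖ ≤ C * (1 + ‖s‖) ^ d) {a b : ℝ} (hab : a ≤ b) (x s : E) :
    ‖w s * cexp (heatPhase p b x s)‖ ≤ C * ((1 + ‖s‖) ^ d * Real.exp (-(a * ‖s‖ ^ p))) := by
  rw [norm_mul, norm_cexp_heatPhase, ← mul_assoc]
  gcongr
  · exact (norm_nonneg _).trans (hC s)
  · exact hC s

lemma norm_mul_cexp_heatPhase_smul_heatPhaseDeriv_le {w : E → ℂ} {C : ℝ} {d : ℕ}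
    (hC : ∀ s, ‖w s * ((‖s‖ : ℝ) : ℂ)‖ ≤ C * (1 + ‖s‖) ^ d) (a : ℝ) (x s : E) :
    ‖(w s * cexp (heatPhase p a x s)) • heatPhaseDeriv s‖ ≤
      C * ((1 + ‖s‖) ^ d * Real.exp (-(a * ‖s‖ ^ p))) :=
  calc _ ≤ ‖w s * cexp (heatPhase p a x s)‖ * ‖s‖ := by
        grw [norm_smul, norm_heatPhaseDeriv_le]
    _ = ‖w s * ((‖s‖ : ℝ) : ℂ) * cexp (heatPhase p a x s)‖ := by
        simp only [norm_mul, Complex.norm_real, norm_norm]; ring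
    _ ≤ _ := norm_mul_cexp_heatPhase_le hC le_rfl x s

variable [MeasureSpace E]

noncomputable def weightedHeatKernel (p : ℕ) (a : ℝ) (w : E → ℂ) (x : E) : ℂ :=
  ∫ s, w s * cexp (heatPhase p a x s)

lemma weightedHeatKernel_const_mul (a : ℝ) (c : ℂ) (w : E → ℂ) (x : E) :
    weightedHeatKernel p a (fun s => c * w s) x = c * weightedHeatKernel p a w x := by
  simp only [weightedHeatKernel, mul_assoc, integral_const_mul]

variable [FiniteDimensional ℝ E] [BorelSpace E] [(volume : Measure E).IsAddHaarMeasure]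

lemma HasPolyGrowth.integrable_mul_cexp_heatPhase {w : E → ℂ} (hw : HasPolyGrowth w)
    (hp : p ≠ 0) {a : ℝ} (ha : 0 < a) (x : E) :
    Integrable (fun s => w s * cexp (heatPhase p a x s)) := by
  obtain ⟨hwc, C, d, hC⟩ := hw
  exact ((integrable_one_add_norm_pow_mul_exp_neg_mul_norm_pow volume ha hp d).const_mul C).mono'
    (hwc.mul (continuous_heatPhase a x).cexp).aestronglyMeasurable
    (ae_of_all _ (norm_mul_cexp_heatPhase_le hC le_rfl x))

lemma HasPolyGrowth.integrable_smul_heatPhaseDeriv {w : E → ℂ} (hw : HasPolyGrowth w)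
    (hp : p ≠ 0) {a : ℝ} (ha : 0 < a) (x : E) :
    Integrable (fun s => (w s * cexp (heatPhase p a x s)) • heatPhaseDeriv s) := by
  obtain ⟨C, d, hC⟩ := (hw.mul hasPolyGrowth_norm).2
  exact ((integrable_one_add_norm_pow_mul_exp_neg_mul_norm_pow volume ha hp d).const_mul C).mono'
    ((hw.1.mul (continuous_heatPhase a x).cexp).smul continuous_heatPhaseDeriv).aestronglyMeasurable
    (ae_of_all _ (norm_mul_cexp_heatPhase_smul_heatPhaseDeriv_le hC a x))

lemma hasFDerivAt_weightedHeatKernel {w : E → ℂ} (hw : HasPolyGrowth w) (hp : p ≠ 0) {a : ℝ}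
    (ha : 0 < a) (x : E) :
    HasFDerivAt (weightedHeatKernel p a w)
      (∫ s, (w s * cexp (heatPhase p a x s)) • heatPhaseDeriv s) x := by
  obtain ⟨C, d, hC⟩ := (hw.mul hasPolyGrowth_norm).2
  exact hasFDerivAt_integral_of_dominated_of_fderiv_le (Metric.ball_mem_nhds x one_pos)
    (Filter.Eventually.of_forall fun y =>
      (hw.integrable_mul_cexp_heatPhase hp ha y).aestronglyMeasurable)
    (hw.integrable_mul_cexp_heatPhase hp ha x)
    (hw.integrable_smul_heatPhaseDeriv hp ha x).aestronglyMeasurable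
    (ae_of_all _ fun s y _ => norm_mul_cexp_heatPhase_smul_heatPhaseDeriv_le hC a y s)
    ((integrable_one_add_norm_pow_mul_exp_neg_mul_norm_pow volume ha hp d).const_mul C)
    (ae_of_all _ fun s y _ =>
      ((hasFDerivAt_heatPhase a y s).cexp.const_mul (w s)).congr_fderiv (smul_smul _ _ _))

lemma fderiv_weightedHeatKernel_apply {w : E → ℂ} (hw : HasPolyGrowth w) (hp : p ≠ 0) {a : ℝ}
    (ha : 0 < a) (x v : E) :
    fderiv ℝ (weightedHeatKernel p a w) x v =
      weightedHeatKernel p a (fun s => I * ((inner ℝ s v : ℝ) : ℂ) * w s) x := by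
  rw [(hasFDerivAt_weightedHeatKernel hw hp ha x).fderiv,
    ContinuousLinearMap.integral_apply (hw.integrable_smul_heatPhaseDeriv hp ha x)]
  refine integral_congr_ae (ae_of_all _ fun s => ?_)
  simp only [smul_apply, heatPhaseDeriv_apply, smul_eq_mul]
  ring

lemma hasDerivAt_weightedHeatKernel_param {w : E → ℂ} (hw : HasPolyGrowth w) (hp : p ≠ 0)
    {a : ℝ} (ha : 0 < a) (x : E) :
    HasDerivAt (fun b => weightedHeatKernel p b w x)
      (-weightedHeatKernel p a (fun s => ((‖s‖ : ℝ) : ℂ) ^ p * w s) x) a := by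
  have hw' := (hasPolyGrowth_norm_pow p).mul hw
  obtain ⟨C, d, hC⟩ := hw'.2
  have ha2 : 0 < a / 2 := half_pos ha
  have hbound : ∀ s, ∀ b ∈ Metric.ball a (a / 2),
      ‖-(((‖s‖ : ℝ) : ℂ) ^ p * w s * cexp (heatPhase p b x s))‖ ≤
        C * ((1 + ‖s‖) ^ d * Real.exp (-(a / 2 * ‖s‖ ^ p))) := fun s b hb => by
    rw [norm_neg]
    refine norm_mul_cexp_heatPhase_le hC ?_ x s
    rw [Metric.mem_ball, Real.dist_eq, abs_lt] at hb
    linarith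
  have hderiv : ∀ s b, HasDerivAt (fun b : ℝ => w s * cexp (heatPhase p b x s))
      (-(((‖s‖ : ℝ) : ℂ) ^ p * w s * cexp (heatPhase p b x s))) b := fun s b =>
    ((hasDerivAt_heatPhase_param b x s).cexp.const_mul (w s)).congr_deriv (by ring)
  have hcont : ∀ b, Continuous fun s => w s * cexp (heatPhase p b x s) := fun b =>
    hw.1.mul (continuous_heatPhase b x).cexp
  have key := hasDerivAt_integral_of_dominated_loc_of_deriv_le (Metric.ball_mem_nhds a ha2)
    (Filter.Eventually.of_forall fun b => (hcont b).aestronglyMeasurable)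
    (hw.integrable_mul_cexp_heatPhase hp ha x)
    (hw'.integrable_mul_cexp_heatPhase hp ha x).neg.aestronglyMeasurable
    (ae_of_all _ hbound)
    ((integrable_one_add_norm_pow_mul_exp_neg_mul_norm_pow volume ha2 hp d).const_mul C)
    (ae_of_all _ fun s b _ => hderiv s b)
  rw [weightedHeatKernel, ← integral_neg]
  exact key.2

end WeightedHeatKernel

section Euclidean

variable {n p : ℕ}

lemma laplacian_weightedHeatKernel {w : EuclideanSpace ℝ (Fin n) → ℂ} (hw : HasPolyGrowth w)
    (hp : p ≠ 0) {a : ℝ} (ha : 0 < a) :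
    Laplacian' (weightedHeatKernel p a w) =
      weightedHeatKernel p a (fun s => -((‖s‖ : ℝ) : ℂ) ^ 2 * w s) := by
  funext x
  have hweight : ∀ (i : Fin n) {v : EuclideanSpace ℝ (Fin n) → ℂ}, HasPolyGrowth v →
      HasPolyGrowth fun s => I * ((inner ℝ s (EuclideanSpace.single i 1) : ℝ) : ℂ) * v s :=
    fun i _ hv => (hasPolyGrowth_I_mul_inner _).mul hv
  have hfirst : ∀ i : Fin n, (fun y => fderiv ℝ (weightedHeatKernel p a w) y
      (EuclideanSpace.single i 1)) = weightedHeatKernel p a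
        (fun s => I * ((inner ℝ s (EuclideanSpace.single i 1) : ℝ) : ℂ) * w s) :=
    fun i => funext fun y => fderiv_weightedHeatKernel_apply hw hp ha y _
  simp only [Laplacian', hfirst, fderiv_weightedHeatKernel_apply (hweight _ hw) hp ha,
    weightedHeatKernel]
  rw [← integral_finsetSum _ fun i _ =>
    (hweight i (hweight i hw)).integrable_mul_cexp_heatPhase hp ha x]
  refine integral_congr_ae (ae_of_all _ fun s => ?_)
  have hnorm : ((‖s‖ : ℝ) : ℂ) ^ 2 = ∑ i, ((s i : ℝ) : ℂ) ^ 2 := by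
    rw [← Complex.ofReal_pow, EuclideanSpace.real_norm_sq_eq]
    push_cast; rfl
  simp only [EuclideanSpace.inner_single_right, conj_trivial, one_mul, hnorm,
    ← Finset.sum_neg_distrib, Finset.sum_mul]
  refine Finset.sum_congr rfl fun i _ => ?_
  linear_combination (((s i : ℝ) : ℂ) ^ 2 * w s * cexp (heatPhase p a x s)) * I_sq

lemma iterate_laplacian_weightedHeatKernel {w : EuclideanSpace ℝ (Fin n) → ℂ}
    (hw : HasPolyGrowth w) (hp : p ≠ 0) {a : ℝ} (ha : 0 < a) (k : ℕ) :
    Laplacian'^[k] (weightedHeatKernel p a w) =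
      weightedHeatKernel p a (fun s => (-((‖s‖ : ℝ) : ℂ) ^ 2) ^ k * w s) := by
  induction k with
  | zero => simp
  | succ k ih =>
    rw [Function.iterate_succ_apply', ih,
      laplacian_weightedHeatKernel (((hasPolyGrowth_norm_pow 2).neg.pow k).mul hw) hp ha]
    congr 1 with s
    ring

end Euclidean

lemma heatKernel_eq_weightedHeatKernel (n m : ℕ) (a : ℝ) :
    heatKernel n m a = weightedHeatKernel (2 * m) a (fun _ => ((((2 * π) ^ n)⁻¹ : ℝ) : ℂ)) := by
  funext x
  simp only [heatKernel, weightedHeatKernel, heatPhase, ← integral_smul, Complex.real_smul]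

lemma neg_one_pow_mul_neg_sq_pow (m : ℕ) (r : ℂ) : (-1) ^ m * (-r ^ 2) ^ m = r ^ (2 * m) := by
  rw [← mul_pow, neg_one_mul, neg_neg, pow_mul]

theorem heatKernel_time_dependent_solution_general (n m : ℕ) (hm : 1 ≤ m)
    (T : ℝ) (α : ℝ → ℝ) (hα : Continuous α)
    (α₁ : ℝ → ℝ) (hα₁ : ∀ t, α₁ t = ∫ s in (0 : ℝ)..t, α s)
    (hpos : ∀ t ∈ Set.Ioc (0 : ℝ) T, 0 < α₁ t)
    (x : EuclideanSpace ℝ (Fin n)) :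
    ∀ t ∈ Set.Ioo (0 : ℝ) T,
      HasDerivAt (fun τ : ℝ => heatKernel n m (α₁ τ) x)
        (-(α t) • ((-1 : ℂ) ^ m * (Laplacian'^[m] (heatKernel n m (α₁ t))) x)) t := by
  intro t ht
  have ha : 0 < α₁ t := hpos t ⟨ht.1, ht.2.le⟩
  have hp : 2 * m ≠ 0 := by omega
  have hw := hasPolyGrowth_const (E := EuclideanSpace ℝ (Fin n)) (((2 * π) ^ n)⁻¹ : ℝ)
  have hα₁' : HasDerivAt α₁ (α t) t := funext hα₁ ▸ (hα.integral_hasStrictDerivAt 0 t).hasDerivAt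
  have hK := (hasDerivAt_weightedHeatKernel_param hw hp ha x).scomp t hα₁'
  simp only [heatKernel_eq_weightedHeatKernel, iterate_laplacian_weightedHeatKernel hw hp ha,
    ← weightedHeatKernel_const_mul, ← mul_assoc, neg_one_pow_mul_neg_sq_pow]
  rwa [neg_smul, ← smul_neg]

theorem heatKernel_time_dependent_solution (n m : ℕ) (hn : 1 ≤ n) (hm : 1 ≤ m)
    (T : ℝ) (hT : 0 < T) (α : ℝ → ℝ) (hα : Continuous α)
    (α₁ : ℝ → ℝ) (hα₁ : ∀ t, α₁ t = ∫ s in (0 : ℝ)..t, α s)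
    (hpos : ∀ t ∈ Set.Ioc (0 : ℝ) T, 0 < α₁ t)
    (x : EuclideanSpace ℝ (Fin n)) :
    ∀ t ∈ Set.Ioo (0 : ℝ) T,
      HasDerivAt (fun τ : ℝ => heatKernel n m (α₁ τ) x)
        (-(α t) • ((-1 : ℂ) ^ m * (Laplacian'^[m] (heatKernel n m (α₁ t))) x)) t :=
  heatKernel_time_dependent_solution_general n m hm T α hα α₁ hα₁ hpos x
end

section
/- Let n ≥ 1 and m ≥ 1 be integers and let u₀ : ℝⁿ → ℂ be a Schwartz function. Then for every x ∈ ℝⁿ, the Poisson integral ∫_{ℝⁿ} E_{m,a}(x − y) u₀(y) dy tends to u₀(x) as a → 0⁺; that is, the Poisson integral attains the initial condition of the Cauchy problem for the polyharmonic heat equation. -/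
/-! After the substitution `s = 2πξ` the kernel is the inverse Fourier transform of the symbol
`exp (-a (2π‖ξ‖)^(2m))`, which is integrable for `a > 0`, so by Fubini the Poisson integral is
`𝓕⁻ (symbol · 𝓕 u₀)`. The symbol is bounded by `1` and tends to `1` pointwise as `a → 0⁺`, so
dominated convergence and Fourier inversion give the limit `𝓕⁻ (𝓕 u₀) = u₀`. -/

open MeasureTheory Real Complex

open Filter Topology
open scoped FourierTransform RealInnerProductSpace

theorem sq_le_one_add_pow {t : ℝ} (ht : 0 ≤ t) {k : ℕ} (hk : 2 ≤ k) : t ^ 2 ≤ 1 + t ^ k := by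
  rcases le_total t 1 with h | h
  · nlinarith [pow_le_one₀ ht h (n := 2), pow_nonneg ht k]
  · nlinarith [pow_le_pow_right₀ h hk]

variable {V E : Type*} [NormedAddCommGroup V] [NormedAddCommGroup E] [NormedSpace ℂ E]

/-- The `2π` comes from Mathlib's normalization `𝓕 f ξ = ∫ x, 𝐞 (-⟪x, ξ⟫) • f x`, where
`𝐞 t = exp (2πit)`. -/
noncomputable def heatMultiplier (m : ℕ) (a : ℝ) (ξ : V) : ℂ :=
  (Real.exp (-(a * (2 * π * ‖ξ‖) ^ (2 * m))) : ℂ)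

theorem continuous_heatMultiplier (m : ℕ) (a : ℝ) : Continuous (heatMultiplier (V := V) m a) := by
  unfold heatMultiplier; fun_prop

theorem norm_heatMultiplier_le_one (m : ℕ) {a : ℝ} (ha : 0 ≤ a) (ξ : V) :
    ‖heatMultiplier m a ξ‖ ≤ 1 := by
  rw [heatMultiplier, Complex.norm_real, Real.norm_of_nonneg (Real.exp_pos _).le,
    Real.exp_le_one_iff, neg_nonpos]
  positivity

theorem tendsto_heatMultiplier (m : ℕ) (ξ : V) :
    Tendsto (heatMultiplier m · ξ) (𝓝 0) (𝓝 1) := by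
  have h : Continuous (heatMultiplier m · ξ) := by unfold heatMultiplier; fun_prop
  simpa [heatMultiplier] using h.tendsto 0

variable [InnerProductSpace ℝ V] [FiniteDimensional ℝ V] [MeasurableSpace V] [BorelSpace V]

theorem integrable_exp_neg_mul_norm_pow {b : ℝ} (hb : 0 < b) {k : ℕ} (hk : 2 ≤ k) :
    Integrable (fun v : V ↦ Real.exp (-(b * ‖v‖ ^ k))) := by
  have hgauss : Integrable (fun v : V ↦ Real.exp b * Real.exp (-b * ‖v‖ ^ 2)) := by
    refine Integrable.const_mul ?_ _
    simpa [Complex.norm_exp, ← Complex.ofReal_pow, neg_mul] using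
      (GaussianFourier.integrable_cexp_neg_mul_sq_norm_add (V := V) (b := (b : ℂ))
        (by simpa using hb) 0 0).norm
  refine hgauss.mono' (by fun_prop) (Eventually.of_forall fun v ↦ ?_)
  rw [Real.norm_of_nonneg (Real.exp_pos _).le, ← Real.exp_add, Real.exp_le_exp]
  nlinarith [sq_le_one_add_pow (norm_nonneg v) hk]

theorem integral_fourierInv_sub_smul [CompleteSpace E] {ψ : V → ℂ} {u : V → E}
    (hψ : Integrable ψ) (hu : Integrable u) (x : V) :
    ∫ y, 𝓕⁻ ψ (x - y) • u y = 𝓕⁻ (fun ξ ↦ ψ ξ • 𝓕 u ξ) x := by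
  set φ : V → ℂ := fun ξ ↦ 𝐞 ⟪ξ, x⟫ • ψ ξ
  have hφ : Integrable φ := by
    simpa [φ] using (Real.fourierIntegral_convergent_iff (-x)).2 hψ
  have h𝓕φ : ∀ y, 𝓕 φ y = 𝓕⁻ ψ (x - y) := fun y ↦ by
    simp only [fourier_eq, fourierInv_eq, φ, smul_smul, ← AddChar.map_add_eq_mul, inner_sub_right,
      neg_add_eq_sub]
  calc ∫ y, 𝓕⁻ ψ (x - y) • u y = ∫ y, 𝓕 φ y • u y := by simp_rw [h𝓕φ]
    _ = ∫ ξ, φ ξ • 𝓕 u ξ := by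
      simpa only [flip_innerₗ] using! VectorFourier.integral_fourierIntegral_smul_eq_flip
        (L := innerₗ V) Real.continuous_fourierChar continuous_inner hφ hu
    _ = 𝓕⁻ (fun ξ ↦ ψ ξ • 𝓕 u ξ) x := by
      simp only [fourierInv_eq, φ, smul_assoc]

theorem tendsto_fourierInv_smul_fourier [CompleteSpace E] {ι : Type*} {l : Filter ι}
    [l.IsCountablyGenerated] {ψ : ι → V → ℂ} (hψm : ∀ᶠ i in l, AEStronglyMeasurable (ψ i))
    (hψ1 : ∀ᶠ i in l, ∀ ξ, ‖ψ i ξ‖ ≤ 1) (hψlim : ∀ ξ, Tendsto (ψ · ξ) l (𝓝 1))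
    {u : V → E} (hu : Integrable u) (h𝓕u : Integrable (𝓕 u)) {x : V} (hx : ContinuousAt u x) :
    Tendsto (fun i ↦ 𝓕⁻ (fun ξ ↦ ψ i ξ • 𝓕 u ξ) x) l (𝓝 (u x)) := by
  rw [← hu.fourierInv_fourier_eq h𝓕u hx]
  simp only [fourierInv_eq]
  refine tendsto_integral_filter_of_dominated_convergence (fun ξ ↦ ‖𝓕 u ξ‖) ?_ ?_ h𝓕u.norm ?_
  · filter_upwards [hψm] with i hi
    exact (Real.continuous_fourierChar.comp (by fun_prop)).aestronglyMeasurable.smul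
      (hi.smul h𝓕u.1)
  · filter_upwards [hψ1] with i hi
    refine Eventually.of_forall fun ξ ↦ ?_
    rw [Circle.norm_smul, norm_smul]
    exact mul_le_of_le_one_left (norm_nonneg _) (hi ξ)
  · refine Eventually.of_forall fun ξ ↦ ?_
    simpa using ((hψlim ξ).smul_const (𝓕 u ξ)).const_smul (𝐞 ⟪ξ, x⟫)

theorem integrable_heatMultiplier {m : ℕ} (hm : 1 ≤ m) {a : ℝ} (ha : 0 < a) :
    Integrable (heatMultiplier (V := V) m a) := by
  have h := integrable_exp_neg_mul_norm_pow (V := V)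
    (b := a * (2 * π) ^ (2 * m)) (by positivity) (k := 2 * m) (by omega)
  refine h.ofReal.congr (Eventually.of_forall fun ξ ↦ ?_)
  simp only [heatMultiplier, mul_pow, mul_assoc]
  rfl

theorem heatKernel_eq_fourierInv_s11 (n m : ℕ) (a : ℝ) :
    heatKernel n m a = 𝓕⁻ (heatMultiplier (V := EuclideanSpace ℝ (Fin n)) m a) := by
  ext x
  have h2π : (0 : ℝ) ≤ 2 * π := by positivity
  have hscale := Measure.integral_comp_smul_of_nonneg volume
    (fun s : EuclideanSpace ℝ (Fin n) ↦
      cexp (I * ((⟪x, s⟫ : ℝ) : ℂ) - (a : ℂ) * ((‖s‖ : ℝ) : ℂ) ^ (2 * m))) (2 * π) (hR := h2π)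
  rw [finrank_euclideanSpace_fin] at hscale
  rw [heatKernel, ← hscale, fourierInv_eq']
  congr 1 with ξ
  rw [heatMultiplier, smul_eq_mul, Complex.ofReal_exp, ← Complex.exp_add, real_inner_smul_right,
    norm_smul, Real.norm_of_nonneg h2π, real_inner_comm]
  push_cast
  ring_nf

theorem poisson_integral_initial_condition_general (n m : ℕ) (hm : 1 ≤ m)
    (u₀ : SchwartzMap (EuclideanSpace ℝ (Fin n)) ℂ) :
    ∀ x : EuclideanSpace ℝ (Fin n),
      Filter.Tendsto
        (fun a : ℝ => ∫ y : EuclideanSpace ℝ (Fin n), heatKernel n m a (x - y) * u₀ y)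
        (nhdsWithin 0 (Set.Ioi 0)) (nhds (u₀ x)) := by
  intro x
  have h𝓕u₀ : Integrable (𝓕 (u₀ : EuclideanSpace ℝ (Fin n) → ℂ)) :=
    (SchwartzMap.fourierTransformCLM ℂ u₀).integrable
  refine (tendsto_fourierInv_smul_fourier (l := 𝓝[>] 0) (ψ := heatMultiplier m)
    (Eventually.of_forall fun a ↦ (continuous_heatMultiplier m a).aestronglyMeasurable)
    (eventually_mem_nhdsWithin.mono fun a ha ↦ norm_heatMultiplier_le_one m (le_of_lt ha))
    (fun ξ ↦ (tendsto_heatMultiplier m ξ).mono_left nhdsWithin_le_nhds)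
    u₀.integrable h𝓕u₀ u₀.continuous.continuousAt).congr' ?_
  filter_upwards [self_mem_nhdsWithin] with a ha
  rw [← integral_fourierInv_sub_smul (integrable_heatMultiplier hm ha) u₀.integrable,
    heatKernel_eq_fourierInv_s11]
  rfl

theorem poisson_integral_initial_condition (n m : ℕ) (hn : 1 ≤ n) (hm : 1 ≤ m)
    (u₀ : SchwartzMap (EuclideanSpace ℝ (Fin n)) ℂ) :
    ∀ x : EuclideanSpace ℝ (Fin n),
      Filter.Tendsto
        (fun a : ℝ => ∫ y : EuclideanSpace ℝ (Fin n), heatKernel n m a (x - y) * u₀ y)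
        (nhdsWithin 0 (Set.Ioi 0)) (nhds (u₀ x)) :=
  poisson_integral_initial_condition_general n m hm u₀
end
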